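/- For every τ > 0 and every R ≥ 0, E_FA(τ,R) > 0. Equivalently: there is no joint pmf Q with X-marginal P_X, λ(Q,R) ≥ τ > 0, and D(Q_Y‖P_Y) + max(I_Q(X;Y)−R,0) = 0, and moreover the infimum over the feasible (compact) set is strictly positive whenever nonempty. (Proof idea: zero objective forces Q_Y = P_Y and I_Q(X;Y) ≤ R, whence λ(Q,R) = −D(Q_{Y|X}‖W|P_X) ≤ 0 < τ; conclude by compactness and continuity.) -/

import Mathlib

open scoped BigOperators ENNReal
open Finset

noncomputable section

variable {X Y : Type*} [Fintype X] [Fintype Y]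

/-- X-marginal of a joint distribution on `X × Y`. -/
def margX (Q : X → Y → ℝ) (x : X) : ℝ := ∑ y, Q x y

/-- Y-marginal of a joint distribution on `X × Y`. -/
def margY (Q : X → Y → ℝ) (y : Y) : ℝ := ∑ x, Q x y

/-- Output marginal `P_Y` induced by input distribution `PX` and channel `W`. -/
def outP (PX : X → ℝ) (W : X → Y → ℝ) (y : Y) : ℝ := ∑ x, PX x * W x y

/-- `Q` is a joint pmf on `X × Y`. -/
def IsJointPmf (Q : X → Y → ℝ) : Prop := (∀ x y, 0 ≤ Q x y) ∧ ∑ x, ∑ y, Q x y = 1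

/-- `p` is a pmf. -/
def IsPmf {Z : Type*} [Fintype Z] (p : Z → ℝ) : Prop := (∀ z, 0 ≤ p z) ∧ ∑ z, p z = 1

/-- `W` is a channel: each row `W x ·` is a pmf on `Y`. -/
def IsChannel (W : X → Y → ℝ) : Prop := ∀ x, (∀ y, 0 ≤ W x y) ∧ ∑ y, W x y = 1

/-- Marginal KL divergence `D_m(Q_Y) = D(Q_Y ‖ P_Y)`. -/
def Dm (PX : X → ℝ) (W : X → Y → ℝ) (Q : X → Y → ℝ) : ℝ :=
  ∑ y, margY Q y * Real.log (margY Q y / outP PX W y)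

/-- Conditional KL divergence `D_c(Q) = D(Q_{Y|X} ‖ W | P_X) = D(Q ‖ P_X ⊗ W)`
(for `Q` with X-marginal `P_X`). -/
def Dc (PX : X → ℝ) (W : X → Y → ℝ) (Q : X → Y → ℝ) : ℝ :=
  ∑ x, ∑ y, Q x y * Real.log (Q x y / (PX x * W x y))

/-- Mutual information `I_Q(X;Y)` of the joint distribution `Q`. -/
def MI (Q : X → Y → ℝ) : ℝ :=
  ∑ x, ∑ y, Q x y * Real.log (Q x y / (margX Q x * margY Q y))

/-- `λ(Q,R) = D_m(Q_Y) − D_c(Q) + [I_Q(X;Y) − R]₊`. -/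
def lam (PX : X → ℝ) (W : X → Y → ℝ) (R : ℝ) (Q : X → Y → ℝ) : ℝ :=
  Dm PX W Q - Dc PX W Q + max (MI Q - R) 0

/-- False-alarm exponent `E_FA(τ,R)`: infimum (in extended reals, `⊤` on the empty set)
of `D_m(Q_Y) + [I_Q(X;Y) − R]₊` over joint pmfs `Q` with X-marginal `P_X` and `λ(Q,R) ≥ τ`. -/
def EFA (PX : X → ℝ) (W : X → Y → ℝ) (R τ : ℝ) : ℝ≥0∞ :=
  ⨅ Q ∈ {Q : X → Y → ℝ | IsJointPmf Q ∧ margX Q = PX ∧ τ ≤ lam PX W R Q},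
    ENNReal.ofReal (Dm PX W Q + max (MI Q - R) 0)

/-- Missed-detection exponent `E_MD(τ,R)`: infimum (in extended reals, `⊤` on the empty set)
of `D_c(Q)` over joint pmfs `Q` with X-marginal `P_X` and `λ(Q,R) < τ`. -/
def EMD (PX : X → ℝ) (W : X → Y → ℝ) (R τ : ℝ) : ℝ≥0∞ :=
  ⨅ Q ∈ {Q : X → Y → ℝ | IsJointPmf Q ∧ margX Q = PX ∧ lam PX W R Q < τ},
    ENNReal.ofReal (Dc PX W Q)

/-! Since `D(Q_{Y|X} ‖ W | P_X) ≥ 0` by Gibbs' inequality, the constraint `λ(Q,R) ≥ τ` gives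
`D(Q_Y ‖ P_Y) + [I_Q(X;Y) − R]₊ = λ(Q,R) + D(Q_{Y|X} ‖ W | P_X) ≥ τ` for every feasible `Q`,
so in fact `E_FA(τ,R) ≥ τ`. -/

lemma sub_le_mul_log_div {p q : ℝ} (hp : 0 < p) (hq : 0 ≤ q) : q - p ≤ q * Real.log (q / p) := by
  have h := mul_nonneg hp.le (InformationTheory.klFun_nonneg (div_nonneg hq hp.le))
  rw [InformationTheory.klFun_apply, mul_sub, mul_add, ← mul_assoc, mul_div_cancel₀ _ hp.ne'] at h
  linarith

lemma Finset.sum_sub_sum_le_sum_mul_log_div {ι : Type*} (s : Finset ι) {p q : ι → ℝ}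
    (hp : ∀ i ∈ s, 0 < p i) (hq : ∀ i ∈ s, 0 ≤ q i) :
    ∑ i ∈ s, q i - ∑ i ∈ s, p i ≤ ∑ i ∈ s, q i * Real.log (q i / p i) := by
  rw [← Finset.sum_sub_distrib]
  exact Finset.sum_le_sum fun i hi => sub_le_mul_log_div (hp i hi) (hq i hi)

lemma Dc_nonneg {PX : X → ℝ} {W : X → Y → ℝ} {Q : X → Y → ℝ}
    (hPXpos : ∀ x, 0 < PX x) (hW : IsChannel W) (hWpos : ∀ x y, 0 < W x y)
    (hQ : ∀ x y, 0 ≤ Q x y) (hmarg : margX Q = PX) :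
    0 ≤ Dc PX W Q := by
  refine Finset.sum_nonneg fun x _ => ?_
  have hmass : ∑ y, Q x y - ∑ y, PX x * W x y = 0 := by
    rw [← Finset.mul_sum, (hW x).2, mul_one, ← hmarg, margX, sub_self]
  exact hmass ▸ Finset.sum_sub_sum_le_sum_mul_log_div _
    (fun y _ => mul_pos (hPXpos x) (hWpos x y)) (fun y _ => hQ x y)

lemma lam_le_of_Dc_nonneg {PX : X → ℝ} {W : X → Y → ℝ} {Q : X → Y → ℝ} (R : ℝ)
    (hDc : 0 ≤ Dc PX W Q) : lam PX W R Q ≤ Dm PX W Q + max (MI Q - R) 0 := by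
  unfold lam
  linarith

lemma ofReal_le_EFA {PX : X → ℝ} {W : X → Y → ℝ}
    (hPXpos : ∀ x, 0 < PX x) (hW : IsChannel W) (hWpos : ∀ x y, 0 < W x y) (R τ : ℝ) :
    ENNReal.ofReal τ ≤ EFA PX W R τ := by
  refine le_iInf₂ fun Q ⟨hQ, hmarg, hτ⟩ => ENNReal.ofReal_le_ofReal ?_
  exact hτ.trans (lam_le_of_Dc_nonneg R (Dc_nonneg hPXpos hW hWpos hQ.1 hmarg))

theorem EFA_pos_of_tau_pos_general
    (PX : X → ℝ) (W : X → Y → ℝ)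
    (hPXpos : ∀ x, 0 < PX x)
    (hW : IsChannel W) (hWpos : ∀ x y, 0 < W x y)
    (R : ℝ) :
    ∀ τ : ℝ, 0 < τ → 0 < EFA PX W R τ := fun τ hτ =>
  (ENNReal.ofReal_pos.mpr hτ).trans_le (ofReal_le_EFA hPXpos hW hWpos R τ)

/-- for every `τ > 0` and every `R ≥ 0`, `E_FA(τ,R) > 0`. -/
theorem EFA_pos_of_tau_pos
    (PX : X → ℝ) (W : X → Y → ℝ)
    (hPX : IsPmf PX) (hPXpos : ∀ x, 0 < PX x)
    (hW : IsChannel W) (hWpos : ∀ x y, 0 < W x y)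
    (R : ℝ) (hR : 0 ≤ R) :
    ∀ τ : ℝ, 0 < τ → 0 < EFA PX W R τ :=
  EFA_pos_of_tau_pos_general PX W hPXpos hW hWpos R
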